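/- Let a₁ = (1/P([0,1/2])) ∫_{[0,1/2]} x dP(x) and a₂ = (1/P([1/2,1])) ∫_{[1/2,1]} x dP(x) be the conditional expectations over the left and right halves of [0,1]. Then a₁ = 3/14, a₂ = 11/14, the distortion error of γ = {3/14, 11/14} is V(P; γ) = 13/441, and V(P; γ) > V_2; hence γ does not form an optimal set of two-means for P. -/

import Mathlib

open MeasureTheory Filter
open scoped ENNReal

noncomputable section

/-- The three contractive similarities `S j x = x/5 + 2 j/5` (indexing `j = 0,1,2`
corresponds to the paper's `j = 1,2,3`). -/
def S (j : Fin 3) : ℝ → ℝ := fun x => x / 5 + 2 * (j : ℝ) / 5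

/-- For a word `σ ∈ {1,2,3}^k`, the composition `S_σ = S_{σ 0} ∘ ⋯ ∘ S_{σ (k-1)}`. -/
def Sword {k : ℕ} (σ : Fin k → Fin 3) : ℝ → ℝ :=
  (List.ofFn fun i => S (σ i)).foldr (· ∘ ·) id

/-- The basic interval `J j = S j ([0,1])`. -/
def J (j : Fin 3) : Set ℝ := S j '' Set.Icc 0 1

/-- The interval `J_σ = S_σ([0,1])`. -/
def Jword {k : ℕ} (σ : Fin k → Fin 3) : Set ℝ := Sword σ '' Set.Icc 0 1

/-- The distortion error `V(P; α) = ∫ min_{a ∈ α} (x - a)^2 dP(x)`. -/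
def distortion (P : Measure ℝ) (α : Set ℝ) : ℝ :=
  ∫ x, (⨅ a : α, (x - (a : ℝ)) ^ 2) ∂P

/-- The `n`-th quantization error
`V_n = inf { V(P; α) : α ⊂ ℝ finite, 1 ≤ card α ≤ n }`. -/
def quantErr (P : Measure ℝ) (n : ℕ) : ℝ :=
  sInf {e | ∃ α : Set ℝ, α.Finite ∧ α.Nonempty ∧ α.ncard ≤ n ∧ distortion P α = e}

/-- The self-similarity equation `P = (1/3)(P∘S₁⁻¹ + P∘S₂⁻¹ + P∘S₃⁻¹)`
characterizing the standard triadic Cantor distribution. -/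
def IsTriadicCantor (P : Measure ℝ) : Prop :=
  P = (3 : ℝ≥0∞)⁻¹ • (P.map (S 0) + P.map (S 1) + P.map (S 2))

/-!
Self-similarity turns `∫ f dP` into `3⁻¹ ∑ⱼ ∫ f ∘ S j dP`, and `S j ⁻¹' Iic t = Iic (5t - 2j)`, so the
partial moments `∫_{x ≤ t} xᵏ dP` obey a linear recursion in `t ↦ 5t - 2j`. Since `P` lives on
`[0, 1]`, partial moments at `t ≥ 1` are full moments and at `t < 0` vanish; at `t = 1/2` (the fixed
point of the middle map), at `17/50` (in the gap `(1/5, 2/5)`) and at `117/250 = S 1 (17/50)` the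
recursion closes up into finitely many linear equations. For `c ≤ d` the distortion of `{c, d}` is
`∫ (x - d)² + 2 (d - c) ∫_{x ≤ m} (x - m)` with `m = (c + d)/2`, so only moments of order `≤ 1`
on the left cell are needed. The pair `{9/50, 189/250}`, the centroids of `J 0 ∪ S 1 (J 0)` and of
the rest of the support, has distortion `821/28125 < 13/441`. The right half `[1/2, 1]` is handled by
the reflection `x ↦ 1 - x`, which conjugates `S j` to `S j.rev` and so preserves the self-similarity.
-/

open Set

lemma distortion_nonneg (μ : Measure ℝ) (α : Set ℝ) : 0 ≤ distortion μ α :=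
  integral_nonneg fun _ => Real.iInf_nonneg fun _ => sq_nonneg _

lemma quantErr_le_distortion (μ : Measure ℝ) {n : ℕ} {α : Set ℝ} (hfin : α.Finite)
    (hne : α.Nonempty) (hcard : α.ncard ≤ n) : quantErr μ n ≤ distortion μ α :=
  csInf_le ⟨0, fun _ ⟨β, _, _, _, hβ⟩ => hβ ▸ distortion_nonneg μ β⟩ ⟨α, hfin, hne, hcard, rfl⟩

lemma iInf_pair_sq (c d x : ℝ) :
    ⨅ a : ({c, d} : Set ℝ), (x - (a : ℝ)) ^ 2 = min ((x - c) ^ 2) ((x - d) ^ 2) := by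
  rw [← csInf_pair, ← image_pair (fun a => (x - a) ^ 2), image_eq_range]
  rfl

lemma distortion_pair {μ : Measure ℝ} {c d : ℝ} (hcd : c ≤ d)
    (hsq : Integrable (fun x => (x - d) ^ 2) μ) (hlin : Integrable (fun x => x - (c + d) / 2) μ) :
    distortion μ {c, d} =
      ∫ x, (x - d) ^ 2 ∂μ + 2 * (d - c) * ∫ x in Iic ((c + d) / 2), (x - (c + d) / 2) ∂μ := by
  have hmin : ∀ x, min ((x - c) ^ 2) ((x - d) ^ 2) =
      (x - d) ^ 2 + (Iic ((c + d) / 2)).indicator (fun x => 2 * (d - c) * (x - (c + d) / 2)) x := by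
    intro x
    by_cases hx : x ≤ (c + d) / 2
    · rw [indicator_of_mem (mem_Iic.2 hx), min_eq_left (by nlinarith)]; ring
    · rw [indicator_of_notMem (mt mem_Iic.1 hx), min_eq_right (by nlinarith), add_zero]
  simp only [distortion, iInf_pair_sq, hmin]
  rw [integral_add hsq ((hlin.const_mul _).indicator measurableSet_Iic),
    integral_indicator measurableSet_Iic, integral_const_mul]

lemma S_apply (j : Fin 3) (x : ℝ) : S j x = x / 5 + 2 * j / 5 := rfl

lemma measurable_S (j : Fin 3) : Measurable (S j) := by unfold S; fun_prop

lemma S_preimage_Iic (j : Fin 3) (t : ℝ) : S j ⁻¹' Iic t = Iic (5 * t - 2 * j) := by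
  ext x; simp only [mem_preimage, mem_Iic, S]; constructor <;> intro h <;> linarith

lemma one_sub_S (j : Fin 3) (x : ℝ) : 1 - S j x = S j.rev (1 - x) := by
  fin_cases j <;> simp [S] <;> ring

instance isProbabilityMeasure_map_one_sub (P : Measure ℝ) [IsProbabilityMeasure P] :
    IsProbabilityMeasure (P.map (fun x => 1 - x)) :=
  Measure.isProbabilityMeasure_map (by fun_prop)

def partialMoment (P : Measure ℝ) (k : ℕ) (t : ℝ) : ℝ := ∫ x in Iic t, x ^ k ∂P

namespace IsTriadicCantor

variable {P : Measure ℝ}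

lemma eq_sum (hP : IsTriadicCantor P) : P = (3 : ℝ≥0∞)⁻¹ • ∑ j, P.map (S j) := by
  rw [Fin.sum_univ_three]; exact hP

lemma map_one_sub (hP : IsTriadicCantor P) : IsTriadicCantor (P.map (fun x => 1 - x)) := by
  have hR : Measurable (fun x : ℝ => 1 - x) := by fun_prop
  have hcomm : ∀ j : Fin 3,
      (P.map (S j)).map (fun x => 1 - x) = (P.map (fun x => 1 - x)).map (S j.rev) := by
    intro j
    rw [Measure.map_map hR (measurable_S j), Measure.map_map (measurable_S _) hR]
    exact congrArg (Measure.map · P) (funext (one_sub_S j))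
  rw [IsTriadicCantor]
  conv_lhs => rw [hP]
  rw [Measure.map_smul, Measure.map_add _ _ hR, Measure.map_add _ _ hR, hcomm, hcomm, hcomm,
    show (Fin.rev 0 : Fin 3) = 2 from rfl, show (Fin.rev 1 : Fin 3) = 1 from rfl,
    show (Fin.rev 2 : Fin 3) = 0 from rfl]
  ac_rfl

lemma measureReal_eq [IsFiniteMeasure P] (hP : IsTriadicCantor P) {A : Set ℝ}
    (hA : MeasurableSet A) : P.real A = 3⁻¹ * ∑ j, P.real (S j ⁻¹' A) := by
  conv_lhs => rw [hP.eq_sum]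
  simp [measureReal_def, Measure.map_apply (measurable_S _) hA, ENNReal.toReal_sum, measure_ne_top]

lemma measureReal_Iic_le [IsFiniteMeasure P] (hP : IsTriadicCantor P) (t : ℝ) :
    P.real (Iic t) ≤ P.real (Iic (5 * t)) := by
  have hle : ∀ j : Fin 3, P.real (Iic (5 * t - 2 * j)) ≤ P.real (Iic (5 * t)) := fun j =>
    measureReal_mono (Iic_subset_Iic.2 (by have : (0 : ℝ) ≤ j := Nat.cast_nonneg _; linarith))
  rw [hP.measureReal_eq measurableSet_Iic]
  simp only [S_preimage_Iic, Fin.sum_univ_three] at hle ⊢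
  linarith [hle 0, hle 1, hle 2]

lemma measureReal_Iic_of_neg [IsProbabilityMeasure P] (hP : IsTriadicCantor P) {t : ℝ}
    (ht : t < 0) : P.real (Iic t) = 0 := by
  have hiter : ∀ n : ℕ, P.real (Iic t) ≤ P.real (Iic (5 ^ n * t)) := by
    intro n
    induction n with
    | zero => simp
    | succ n ih =>
      have h := hP.measureReal_Iic_le (5 ^ n * t)
      rw [← mul_assoc, ← pow_succ'] at h
      exact ih.trans h
  have hlim : Tendsto (fun n : ℕ => P.real (Iic (5 ^ n * t))) atTop (nhds 0) := by
    simp_rw [← ProbabilityTheory.cdf_eq_real]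
    exact (ProbabilityTheory.tendsto_cdf_atBot P).comp
      ((tendsto_pow_atTop_atTop_of_one_lt (by norm_num : (1 : ℝ) < 5)).atTop_mul_const_of_neg ht)
  exact le_antisymm (ge_of_tendsto' hlim hiter) measureReal_nonneg

lemma measure_Iio_zero [IsProbabilityMeasure P] (hP : IsTriadicCantor P) : P (Iio 0) = 0 := by
  have h := hP.measureReal_eq (measurableSet_Iio (a := (0 : ℝ)))
  have hneg : ∀ j : Fin 3, j ≠ 0 → P.real (S j ⁻¹' Iio 0) = 0 := fun j hj => by
    refine measureReal_mono_null (fun x hx => ?_)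
      (hP.measureReal_Iic_of_neg (t := -1) (by norm_num))
    have : (1 : ℝ) ≤ j := by exact_mod_cast Fin.pos_iff_ne_zero.2 hj
    simp only [mem_preimage, mem_Iio, S] at hx
    simp only [mem_Iic]; linarith
  have h0 : S 0 ⁻¹' Iio 0 = Iio (0 : ℝ) := by
    ext x; simp [S]; constructor <;> intro <;> linarith
  rw [Fin.sum_univ_three, hneg 1 (by decide), hneg 2 (by decide), h0] at h
  exact (measureReal_eq_zero_iff).1 (by linarith)

lemma ae_mem_Icc [IsProbabilityMeasure P] (hP : IsTriadicCantor P) :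
    ∀ᵐ x ∂P, x ∈ Icc (0 : ℝ) 1 := by
  have hIoi : P (Ioi 1) = 0 := by
    have h := hP.map_one_sub.measure_Iio_zero
    rwa [Measure.map_apply (by fun_prop) measurableSet_Iio, preimage_const_sub_Iio, sub_zero] at h
  rw [ae_iff]
  refine measure_mono_null (fun x hx => ?_) (measure_union_null hP.measure_Iio_zero hIoi)
  simp only [mem_ofPred_eq, mem_Icc, not_and_or, not_le] at hx
  exact hx

lemma integrable_of_continuous [IsProbabilityMeasure P] (hP : IsTriadicCantor P) {f : ℝ → ℝ}
    (hf : Continuous f) : Integrable f P := by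
  rw [← Measure.restrict_eq_self_of_ae_mem hP.ae_mem_Icc]
  exact hf.integrableOn_Icc

lemma integral_eq (hP : IsTriadicCantor P) {f : ℝ → ℝ} (hf : Integrable f P) :
    ∫ x, f x ∂P = 3⁻¹ * ∑ j, ∫ x, f (S j x) ∂P := by
  rw [hP.eq_sum] at hf
  have hmap : ∀ j ∈ Finset.univ, Integrable f (P.map (S j)) :=
    integrable_finsetSum_measure.1 ((integrable_smul_measure (by norm_num) (by norm_num)).1 hf)
  conv_lhs => rw [hP.eq_sum]
  rw [integral_smul_measure, integral_finsetSum_measure hmap]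
  simp only [ENNReal.toReal_inv, ENNReal.toReal_ofNat, smul_eq_mul]
  congr 1
  exact Finset.sum_congr rfl fun j hj =>
    integral_map (measurable_S j).aemeasurable (hmap j hj).aestronglyMeasurable

variable [IsProbabilityMeasure P]

lemma setIntegral_Iic_eq (hP : IsTriadicCantor P) {f : ℝ → ℝ} (hf : Continuous f) (t : ℝ) :
    ∫ x in Iic t, f x ∂P = 3⁻¹ * ∑ j : Fin 3, ∫ x in Iic (5 * t - 2 * j), f (S j x) ∂P := by
  rw [← integral_indicator measurableSet_Iic,
    hP.integral_eq ((hP.integrable_of_continuous hf).indicator measurableSet_Iic)]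
  congr 1
  refine Finset.sum_congr rfl fun j _ => ?_
  rw [← S_preimage_Iic, ← integral_indicator (measurableSet_Iic.preimage (measurable_S j))]
  rfl

lemma partialMoment_of_one_le (hP : IsTriadicCantor P) (k : ℕ) {t : ℝ} (ht : 1 ≤ t) :
    partialMoment P k t = ∫ x, x ^ k ∂P := by
  rw [partialMoment, Measure.restrict_eq_self_of_ae_mem]
  exact hP.ae_mem_Icc.mono fun x hx => hx.2.trans ht

lemma partialMoment_of_neg (hP : IsTriadicCantor P) (k : ℕ) {t : ℝ} (ht : t < 0) :
    partialMoment P k t = 0 :=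
  setIntegral_measure_zero _ (measure_mono_null (Iic_subset_Iio.2 ht) hP.measure_Iio_zero)

lemma partialMoment_eq (hP : IsTriadicCantor P) (k : ℕ) (t : ℝ) :
    partialMoment P k t = 3⁻¹ * ∑ j : Fin 3, ∑ i ∈ Finset.range (k + 1),
      (k.choose i : ℝ) * (2 * j / 5) ^ (k - i) / 5 ^ i * partialMoment P i (5 * t - 2 * j) := by
  rw [partialMoment, hP.setIntegral_Iic_eq (by fun_prop) t]
  congr 1
  refine Finset.sum_congr rfl fun j _ => ?_
  simp_rw [S_apply, add_pow, div_pow]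
  rw [integral_finsetSum _ fun i _ => (hP.integrable_of_continuous (by fun_prop)).integrableOn]
  refine Finset.sum_congr rfl fun i _ => ?_
  rw [partialMoment, ← integral_const_mul]
  congr 1 with x
  ring

lemma integral_id_eq (hP : IsTriadicCantor P) : ∫ x, x ∂P = 1 / 2 := by
  have h := hP.partialMoment_eq 1 1
  simp (disch := norm_num) only [Fin.sum_univ_three, Finset.sum_range_succ, Finset.sum_range_zero,
    hP.partialMoment_of_one_le] at h
  norm_num at h
  linarith

lemma integral_sq_eq (hP : IsTriadicCantor P) : ∫ x, x ^ 2 ∂P = 13 / 36 := by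
  have h := hP.partialMoment_eq 2 1
  simp (disch := norm_num) only [Fin.sum_univ_three, Finset.sum_range_succ, Finset.sum_range_zero,
    hP.partialMoment_of_one_le] at h
  norm_num [hP.integral_id_eq] at h
  linarith

lemma partialMoment_zero_half (hP : IsTriadicCantor P) : partialMoment P 0 (1 / 2) = 1 / 2 := by
  have h := hP.partialMoment_eq 0 (1 / 2)
  simp (disch := norm_num) only [Fin.sum_univ_three, Finset.sum_range_succ, Finset.sum_range_zero,
    hP.partialMoment_of_one_le, hP.partialMoment_of_neg] at h
  norm_num at h
  linarith

lemma partialMoment_one_half (hP : IsTriadicCantor P) : partialMoment P 1 (1 / 2) = 3 / 28 := by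
  have h := hP.partialMoment_eq 1 (1 / 2)
  simp (disch := norm_num) only [Fin.sum_univ_three, Finset.sum_range_succ, Finset.sum_range_zero,
    hP.partialMoment_of_one_le, hP.partialMoment_of_neg] at h
  norm_num [hP.integral_id_eq, hP.partialMoment_zero_half] at h
  linarith

lemma distortion_pair_eq (hP : IsTriadicCantor P) {c d : ℝ} (hcd : c ≤ d) :
    distortion P {c, d} = 13 / 36 - d + d ^ 2 + 2 * (d - c) *
      (partialMoment P 1 ((c + d) / 2) - (c + d) / 2 * partialMoment P 0 ((c + d) / 2)) := by
  have hint : ∀ f : ℝ → ℝ, Continuous f → Integrable f P := fun _ => hP.integrable_of_continuous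
  have hsq : ∫ x, (x - d) ^ 2 ∂P = ∫ x, x ^ 2 ∂P - 2 * d * ∫ x, x ∂P + d ^ 2 := by
    calc ∫ x, (x - d) ^ 2 ∂P = ∫ x, (x ^ 2 - 2 * d * x + d ^ 2) ∂P := by congr 1 with x; ring
      _ = _ := by
        rw [integral_add (hint _ (by fun_prop)) (integrable_const _),
          integral_sub (hint _ (by fun_prop)) (hint _ (by fun_prop)), integral_const_mul]
        simp
  have hlin : ∀ m, ∫ x in Iic m, (x - m) ∂P = partialMoment P 1 m - m * partialMoment P 0 m := by
    intro m
    rw [integral_sub (hint (fun x => x) continuous_id).integrableOn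
      (integrable_const _).integrableOn]
    simp [partialMoment, mul_comm]
  rw [distortion_pair hcd (hint _ (by fun_prop)) (hint _ (by fun_prop)), hsq, hlin,
    hP.integral_sq_eq, hP.integral_id_eq]
  ring

lemma distortion_halves_centroids (hP : IsTriadicCantor P) :
    distortion P {3 / 14, 11 / 14} = 13 / 441 := by
  rw [hP.distortion_pair_eq (by norm_num)]
  norm_num [hP.partialMoment_zero_half, hP.partialMoment_one_half]

lemma distortion_level_two_centroids (hP : IsTriadicCantor P) :
    distortion P {9 / 50, 189 / 250} = 821 / 28125 := by
  have h₀ : partialMoment P 0 (17 / 50) = 1 / 3 := by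
    have h := hP.partialMoment_eq 0 (17 / 50)
    simp (disch := norm_num) only [Fin.sum_univ_three, Finset.sum_range_succ,
      Finset.sum_range_zero, hP.partialMoment_of_one_le, hP.partialMoment_of_neg] at h
    norm_num at h
    linarith
  have h₁ : partialMoment P 1 (17 / 50) = 1 / 30 := by
    have h := hP.partialMoment_eq 1 (17 / 50)
    simp (disch := norm_num) only [Fin.sum_univ_three, Finset.sum_range_succ,
      Finset.sum_range_zero, hP.partialMoment_of_one_le, hP.partialMoment_of_neg] at h
    norm_num [hP.integral_id_eq] at h
    linarith
  have h₀' : partialMoment P 0 (117 / 250) = 4 / 9 := by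
    have h := hP.partialMoment_eq 0 (117 / 250)
    simp (disch := norm_num) only [Fin.sum_univ_three, Finset.sum_range_succ,
      Finset.sum_range_zero, hP.partialMoment_of_one_le, hP.partialMoment_of_neg] at h
    norm_num [h₀] at h
    linarith
  have h₁' : partialMoment P 1 (117 / 250) = 2 / 25 := by
    have h := hP.partialMoment_eq 1 (117 / 250)
    simp (disch := norm_num) only [Fin.sum_univ_three, Finset.sum_range_succ,
      Finset.sum_range_zero, hP.partialMoment_of_one_le, hP.partialMoment_of_neg] at h
    norm_num [hP.integral_id_eq, h₀, h₁] at h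
    linarith
  rw [hP.distortion_pair_eq (by norm_num)]
  norm_num [h₀', h₁']

lemma Icc_zero_ae_eq_Iic (hP : IsTriadicCantor P) (t : ℝ) : (Icc 0 t : Set ℝ) =ᵐ[P] Iic t :=
  hP.ae_mem_Icc.mono fun _ hx => propext ⟨fun h => h.2, fun h => ⟨hx.1, h⟩⟩

lemma measureReal_Icc_zero_half (hP : IsTriadicCantor P) : P.real (Icc 0 (1 / 2)) = 1 / 2 := by
  rw [measureReal_congr (hP.Icc_zero_ae_eq_Iic _)]
  simpa [partialMoment] using hP.partialMoment_zero_half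

lemma setIntegral_Icc_zero_half (hP : IsTriadicCantor P) :
    ∫ x in Icc 0 (1 / 2), x ∂P = 3 / 28 := by
  rw [setIntegral_congr_set (hP.Icc_zero_ae_eq_Iic _)]
  simpa [partialMoment] using hP.partialMoment_one_half

lemma measureReal_Icc_half_one (hP : IsTriadicCantor P) : P.real (Icc (1 / 2) 1) = 1 / 2 := by
  have h := hP.map_one_sub.measureReal_Icc_zero_half
  rw [map_measureReal_apply (by fun_prop) measurableSet_Icc, preimage_const_sub_Icc] at h
  norm_num at h
  exact h

lemma setIntegral_Icc_half_one (hP : IsTriadicCantor P) :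
    ∫ x in Icc (1 / 2) 1, x ∂P = 11 / 28 := by
  have h := setIntegral_map (g := fun x : ℝ => 1 - x) (f := fun y => 1 - y) (μ := P)
    (measurableSet_Icc (a := 0) (b := 1 / 2)) (by fun_prop) (by fun_prop)
  rw [integral_sub (integrable_const _).integrableOn
      (hP.map_one_sub.integrable_of_continuous (f := fun x => x) continuous_id).integrableOn,
    setIntegral_const, hP.map_one_sub.measureReal_Icc_zero_half,
    hP.map_one_sub.setIntegral_Icc_zero_half, preimage_const_sub_Icc] at h
  norm_num at h
  linarith

end IsTriadicCantor

theorem stmt5 (P : Measure ℝ) [IsProbabilityMeasure P] (hP : IsTriadicCantor P) :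
    (P (Set.Icc (0 : ℝ) (1 / 2))).toReal⁻¹ * ∫ x in Set.Icc (0 : ℝ) (1 / 2), x ∂P = 3 / 14 ∧
    (P (Set.Icc (1 / 2 : ℝ) 1)).toReal⁻¹ * ∫ x in Set.Icc (1 / 2 : ℝ) 1, x ∂P = 11 / 14 ∧
    distortion P {(3 / 14 : ℝ), 11 / 14} = 13 / 441 ∧
    quantErr P 2 < distortion P {(3 / 14 : ℝ), 11 / 14} := by
  have hβ : quantErr P 2 ≤ 821 / 28125 := by
    rw [← hP.distortion_level_two_centroids]
    exact quantErr_le_distortion P (toFinite _) (insert_nonempty _ _) (ncard_pair (by norm_num)).le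
  simp only [← measureReal_def, hP.measureReal_Icc_zero_half, hP.setIntegral_Icc_zero_half,
    hP.measureReal_Icc_half_one, hP.setIntegral_Icc_half_one, hP.distortion_halves_centroids]
  norm_num
  linarith
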